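/- For any bivariate copula C, the function C̃(u,v) = (1/4)·( C(u,v) + C(v,u) + (u + v − 1 + C(1−u,1−v)) + (u + v − 1 + C(1−v,1−u)) ) is a bivariate copula that is doubly symmetric, i.e. C̃(u,v) = C̃(v,u) and C̃(u,v) = u + v − 1 + C̃(1−u,1−v) for all u, v ∈ [0,1], and it satisfies ρ(C̃) = ρ(C) and φ(C̃) = φ(C). -/

import Mathlib

open MeasureTheory Set

noncomputable section

/-- A bivariate copula on `[0,1]²`. -/
def IsCopula (C : ℝ → ℝ → ℝ) : Prop :=
  (∀ u ∈ Icc (0:ℝ) 1, ∀ v ∈ Icc (0:ℝ) 1, C u v ∈ Icc (0:ℝ) 1) ∧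
  (∀ u ∈ Icc (0:ℝ) 1, C u 0 = 0 ∧ C 0 u = 0 ∧ C u 1 = u ∧ C 1 u = u) ∧
  (∀ u₁ u₂ v₁ v₂ : ℝ, 0 ≤ u₁ → u₁ ≤ u₂ → u₂ ≤ 1 → 0 ≤ v₁ → v₁ ≤ v₂ → v₂ ≤ 1 →
    0 ≤ C u₂ v₂ - C u₂ v₁ - C u₁ v₂ + C u₁ v₁)

/-- Spearman's rho of a copula. -/
def spearmanRho (C : ℝ → ℝ → ℝ) : ℝ :=
  12 * (∫ u in (0:ℝ)..1, ∫ v in (0:ℝ)..1, C u v) - 3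

/-- Spearman's footrule of a copula. -/
def spearmanFootrule (C : ℝ → ℝ → ℝ) : ℝ :=
  6 * (∫ u in (0:ℝ)..1, C u u) - 2

/-!
The copula axioms are preserved by transposition, by passage to the survival copula
`Ĉ(u,v) = u + v - 1 + C(1-u,1-v)` and by convex combinations, and `C̃` is the average of
`S = (C + Ĉ)/2` and its transpose. Both Spearman coefficients are affine in `C` on copulas.
Transposition preserves `ρ` by Fubini and `φ` trivially; passing to `Ĉ` preserves both because
the affine part `u + v - 1` integrates to zero over the square and over the diagonal, while the
substitution `(u,v) ↦ (1-u,1-v)` turns the remaining integral back into that of `C`.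
-/

def survival (C : ℝ → ℝ → ℝ) (u v : ℝ) : ℝ := u + v - 1 + C (1 - u) (1 - v)

theorem intervalIntegral.integral_mul_add_mul {f g : ℝ → ℝ} {μ : Measure ℝ} {a b c d : ℝ}
    (hf : IntervalIntegrable f μ a b) (hg : IntervalIntegrable g μ a b) :
    ∫ x in a..b, (c * f x + d * g x) ∂μ = c * (∫ x in a..b, f x ∂μ) + d * ∫ x in a..b, g x ∂μ := by
  rw [intervalIntegral.integral_add (hf.const_mul c) (hg.const_mul d),
    intervalIntegral.integral_const_mul, intervalIntegral.integral_const_mul]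

theorem intervalIntegral.integral_comp_one_sub (f : ℝ → ℝ) :
    ∫ x in (0:ℝ)..1, f (1 - x) = ∫ x in (0:ℝ)..1, f x := by
  simp [intervalIntegral.integral_comp_sub_left]

theorem IntervalIntegrable.comp_one_sub {f : ℝ → ℝ} (hf : IntervalIntegrable f volume 0 1) :
    IntervalIntegrable (fun x => f (1 - x)) volume 0 1 := by
  simpa using (hf.comp_sub_left 1).symm

namespace IsCopula

variable {C D : ℝ → ℝ → ℝ} {u v : ℝ}

theorem swap (hC : IsCopula C) : IsCopula (Function.swap C) := by
  obtain ⟨hrange, hbdry, hvol⟩ := hC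
  refine ⟨fun u hu v hv => hrange v hv u hu, fun u hu => ?_,
    fun u₁ u₂ v₁ v₂ hu₁ hu hu₂ hv₁ hv hv₂ => ?_⟩
  · obtain ⟨h0l, h0r, h1l, h1r⟩ := hbdry u hu
    exact ⟨h0r, h0l, h1r, h1l⟩
  · have := hvol v₁ v₂ u₁ u₂ hv₁ hv hv₂ hu₁ hu hu₂
    simp only [Function.swap]
    linarith

theorem monotoneOn_left (hC : IsCopula C) (hv : v ∈ Icc (0:ℝ) 1) :
    MonotoneOn (fun u => C u v) (Icc 0 1) := by
  intro u₁ hu₁ u₂ hu₂ h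
  have := hC.2.2 u₁ u₂ 0 v hu₁.1 h hu₂.2 le_rfl hv.1 hv.2
  have := (hC.2.1 u₁ hu₁).1
  have := (hC.2.1 u₂ hu₂).1
  dsimp only
  linarith

theorem monotoneOn_right (hC : IsCopula C) (hu : u ∈ Icc (0:ℝ) 1) :
    MonotoneOn (C u) (Icc 0 1) :=
  hC.swap.monotoneOn_left hu

theorem monotoneOn_diag (hC : IsCopula C) : MonotoneOn (fun u => C u u) (Icc 0 1) :=
  fun _ hu₁ _ hu₂ h =>
    (hC.monotoneOn_left hu₁ hu₁ hu₂ h).trans (hC.monotoneOn_right hu₂ hu₁ hu₂ h)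

theorem le_left (hC : IsCopula C) (hu : u ∈ Icc (0:ℝ) 1) (hv : v ∈ Icc (0:ℝ) 1) :
    C u v ≤ u := by
  simpa [(hC.2.1 u hu).2.2.1] using hC.monotoneOn_right hu hv (right_mem_Icc.2 zero_le_one) hv.2

theorem add_sub_one_le (hC : IsCopula C) (hu : u ∈ Icc (0:ℝ) 1) (hv : v ∈ Icc (0:ℝ) 1) :
    u + v - 1 ≤ C u v := by
  have := hC.2.2 u 1 v 1 hu.1 hu.2 le_rfl hv.1 hv.2 le_rfl
  have := (hC.2.1 1 (right_mem_Icc.2 zero_le_one)).2.2.1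
  have := (hC.2.1 u hu).2.2.1
  have := (hC.2.1 v hv).2.2.2
  linarith

theorem survival (hC : IsCopula C) : IsCopula (_root_.survival C) := by
  refine ⟨fun u hu v hv => ?_, fun u hu => ?_, fun u₁ u₂ v₁ v₂ hu₁ hu hu₂ hv₁ hv hv₂ => ?_⟩
  · have hu' := Icc.mem_iff_one_sub_mem.1 hu
    have hv' := Icc.mem_iff_one_sub_mem.1 hv
    have := hC.add_sub_one_le hu' hv'
    have := hC.le_left hu' hv'
    simp only [_root_.survival, mem_Icc]
    constructor <;> linarith [hv.2]
  · obtain ⟨h0l, h0r, h1l, h1r⟩ := hC.2.1 (1 - u) (Icc.mem_iff_one_sub_mem.1 hu)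
    simp only [_root_.survival, sub_zero, sub_self]
    exact ⟨by linarith, by linarith, by linarith, by linarith⟩
  · have := hC.2.2 (1 - u₂) (1 - u₁) (1 - v₂) (1 - v₁) (by linarith) (by linarith) (by linarith)
      (by linarith) (by linarith) (by linarith)
    simp only [_root_.survival]
    linarith

theorem convexComb (hC : IsCopula C) (hD : IsCopula D) {a b : ℝ} (ha : 0 ≤ a) (hb : 0 ≤ b)
    (hab : a + b = 1) : IsCopula (fun u v => a * C u v + b * D u v) := by
  refine ⟨fun u hu v hv => convex_Icc 0 1 (hC.1 u hu v hv) (hD.1 u hu v hv) ha hb hab,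
    fun u hu => ?_, fun u₁ u₂ v₁ v₂ hu₁ hu hu₂ hv₁ hv hv₂ => ?_⟩
  · obtain ⟨hC0l, hC0r, hC1l, hC1r⟩ := hC.2.1 u hu
    obtain ⟨hD0l, hD0r, hD1l, hD1r⟩ := hD.2.1 u hu
    simp only [hC0l, hC0r, hC1l, hC1r, hD0l, hD0r, hD1l, hD1r, ← add_mul, hab]
    simp
  · have := mul_nonneg ha (hC.2.2 u₁ u₂ v₁ v₂ hu₁ hu hu₂ hv₁ hv hv₂)
    have := mul_nonneg hb (hD.2.2 u₁ u₂ v₁ v₂ hu₁ hu hu₂ hv₁ hv hv₂)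
    linarith

theorem abs_sub_le_left (hC : IsCopula C) {u₁ u₂ : ℝ} (hu₁ : u₁ ∈ Icc (0:ℝ) 1)
    (hu₂ : u₂ ∈ Icc (0:ℝ) 1) (hv : v ∈ Icc (0:ℝ) 1) :
    |C u₁ v - C u₂ v| ≤ |u₁ - u₂| := by
  wlog h : u₁ ≤ u₂ generalizing u₁ u₂
  · rw [abs_sub_comm, abs_sub_comm u₁]
    exact this hu₂ hu₁ (le_of_not_ge h)
  have hmono := hC.monotoneOn_left hv hu₁ hu₂ h
  have := hC.2.2 u₁ u₂ v 1 hu₁.1 h hu₂.2 hv.1 hv.2 le_rfl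
  have := (hC.2.1 u₁ hu₁).2.2.1
  have := (hC.2.1 u₂ hu₂).2.2.1
  rw [abs_sub_comm u₁, abs_of_nonneg (sub_nonneg.2 h)]
  exact abs_le.2 ⟨by linarith, by linarith⟩

theorem continuousOn (hC : IsCopula C) :
    ContinuousOn (Function.uncurry C) (Icc (0:ℝ) 1 ×ˢ Icc (0:ℝ) 1) := by
  refine (LipschitzOnWith.of_dist_le_mul (K := 2) ?_).continuousOn
  rintro ⟨u₁, v₁⟩ ⟨hu₁, hv₁⟩ ⟨u₂, v₂⟩ ⟨hu₂, hv₂⟩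
  have h₁ : |C u₁ v₁ - C u₂ v₁| ≤ |u₁ - u₂| := hC.abs_sub_le_left hu₁ hu₂ hv₁
  have h₂ : |C u₂ v₁ - C u₂ v₂| ≤ |v₁ - v₂| := hC.swap.abs_sub_le_left hv₁ hv₂ hu₂
  have hdist : |u₁ - u₂| ≤ dist (u₁, v₁) (u₂, v₂) ∧ |v₁ - v₂| ≤ dist (u₁, v₁) (u₂, v₂) := by
    rw [Prod.dist_eq, Real.dist_eq, Real.dist_eq]
    exact ⟨le_max_left _ _, le_max_right _ _⟩
  calc dist (C u₁ v₁) (C u₂ v₂) ≤ |C u₁ v₁ - C u₂ v₁| + |C u₂ v₁ - C u₂ v₂| :=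
        Real.dist_eq _ _ ▸ abs_sub_le _ _ _
    _ ≤ 2 * dist (u₁, v₁) (u₂, v₂) := by linarith [hdist.1, hdist.2]

theorem intervalIntegrable_right (hC : IsCopula C) (hu : u ∈ Icc (0:ℝ) 1) :
    IntervalIntegrable (C u) volume 0 1 :=
  MonotoneOn.intervalIntegrable <| by
    rw [uIcc_of_le zero_le_one]; exact hC.monotoneOn_right hu

theorem intervalIntegrable_diag (hC : IsCopula C) :
    IntervalIntegrable (fun u => C u u) volume 0 1 :=
  MonotoneOn.intervalIntegrable <| by
    rw [uIcc_of_le zero_le_one]; exact hC.monotoneOn_diag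

theorem intervalIntegrable_integral_right (hC : IsCopula C) :
    IntervalIntegrable (fun u => ∫ v in (0:ℝ)..1, C u v) volume 0 1 :=
  MonotoneOn.intervalIntegrable <| by
    rw [uIcc_of_le zero_le_one]
    exact fun u₁ hu₁ u₂ hu₂ h => intervalIntegral.integral_mono_on zero_le_one
      (hC.intervalIntegrable_right hu₁) (hC.intervalIntegrable_right hu₂)
      fun v hv => hC.monotoneOn_left hv hu₁ hu₂ h

theorem integrableOn_uIoc (hC : IsCopula C) :
    IntegrableOn (Function.uncurry C) (uIoc 0 1 ×ˢ uIoc 0 1) := by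
  refine (hC.continuousOn.integrableOn_compact (isCompact_Icc.prod isCompact_Icc)).mono_set ?_
  rw [uIoc_of_le zero_le_one]
  exact prod_mono Ioc_subset_Icc_self Ioc_subset_Icc_self

end IsCopula

theorem spearmanRho_swap {C : ℝ → ℝ → ℝ} (hC : IsCopula C) :
    spearmanRho (Function.swap C) = spearmanRho C := by
  unfold spearmanRho
  rw [intervalIntegral_intervalIntegral_swap hC.integrableOn_uIoc]

theorem spearmanRho_convexComb {C D : ℝ → ℝ → ℝ} (hC : IsCopula C) (hD : IsCopula D)
    {a b : ℝ} (hab : a + b = 1) :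
    spearmanRho (fun u v => a * C u v + b * D u v) = a * spearmanRho C + b * spearmanRho D := by
  have hinner : EqOn (fun u => ∫ v in (0:ℝ)..1, (a * C u v + b * D u v))
      (fun u => a * (∫ v in (0:ℝ)..1, C u v) + b * ∫ v in (0:ℝ)..1, D u v) (uIcc 0 1) :=
    fun u hu => by
      rw [uIcc_of_le zero_le_one] at hu
      exact intervalIntegral.integral_mul_add_mul (hC.intervalIntegrable_right hu)
        (hD.intervalIntegrable_right hu)
  unfold spearmanRho
  rw [intervalIntegral.integral_congr hinner, intervalIntegral.integral_mul_add_mul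
    hC.intervalIntegrable_integral_right hD.intervalIntegrable_integral_right]
  linear_combination 3 * hab

theorem spearmanRho_survival {C : ℝ → ℝ → ℝ} (hC : IsCopula C) :
    spearmanRho (survival C) = spearmanRho C := by
  have hinner : EqOn (fun u => ∫ v in (0:ℝ)..1, survival C u v)
      (fun u => u - 1/2 + ∫ v in (0:ℝ)..1, C (1 - u) v) (uIcc 0 1) := fun u hu => by
    rw [uIcc_of_le zero_le_one] at hu
    have hlin : IntervalIntegrable (fun v : ℝ => u + v - 1) volume 0 1 :=
      (intervalIntegrable_const.add intervalIntegral.intervalIntegrable_id).sub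
        intervalIntegrable_const
    simp only [survival]
    rw [intervalIntegral.integral_add hlin
      (hC.intervalIntegrable_right (Icc.mem_iff_one_sub_mem.1 hu)).comp_one_sub,
      intervalIntegral.integral_comp_one_sub (C (1 - u))]
    simp [add_sub_assoc]
    ring
  unfold spearmanRho
  rw [intervalIntegral.integral_congr hinner, intervalIntegral.integral_add
    (intervalIntegral.intervalIntegrable_id.sub intervalIntegrable_const)
    hC.intervalIntegrable_integral_right.comp_one_sub,
    intervalIntegral.integral_comp_one_sub (fun u => ∫ v in (0:ℝ)..1, C u v)]
  simp

theorem spearmanFootrule_convexComb {C D : ℝ → ℝ → ℝ} (hC : IsCopula C) (hD : IsCopula D)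
    {a b : ℝ} (hab : a + b = 1) :
    spearmanFootrule (fun u v => a * C u v + b * D u v) =
      a * spearmanFootrule C + b * spearmanFootrule D := by
  unfold spearmanFootrule
  rw [intervalIntegral.integral_mul_add_mul hC.intervalIntegrable_diag hD.intervalIntegrable_diag]
  linear_combination 2 * hab

theorem spearmanFootrule_survival {C : ℝ → ℝ → ℝ} (hC : IsCopula C) :
    spearmanFootrule (survival C) = spearmanFootrule C := by
  have hlin : IntervalIntegrable (fun u : ℝ => u + u - 1) volume 0 1 :=
    (intervalIntegral.intervalIntegrable_id.add intervalIntegral.intervalIntegrable_id).sub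
      intervalIntegrable_const
  unfold spearmanFootrule
  simp only [survival]
  rw [intervalIntegral.integral_add hlin hC.intervalIntegrable_diag.comp_one_sub,
    intervalIntegral.integral_comp_one_sub (fun u => C u u),
    intervalIntegral.integral_sub (intervalIntegral.intervalIntegrable_id.add
      intervalIntegral.intervalIntegrable_id) intervalIntegrable_const]
  norm_num

theorem symmetrization_is_doubly_symmetric_copula (C : ℝ → ℝ → ℝ) (hC : IsCopula C)
    (Ctilde : ℝ → ℝ → ℝ)
    (hdef : ∀ u v : ℝ, Ctilde u v =
      (1/4) * (C u v + C v u + (u + v - 1 + C (1-u) (1-v)) + (u + v - 1 + C (1-v) (1-u)))) :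
    IsCopula Ctilde ∧
    (∀ u ∈ Icc (0:ℝ) 1, ∀ v ∈ Icc (0:ℝ) 1, Ctilde u v = Ctilde v u) ∧
    (∀ u ∈ Icc (0:ℝ) 1, ∀ v ∈ Icc (0:ℝ) 1, Ctilde u v = u + v - 1 + Ctilde (1-u) (1-v)) ∧
    spearmanRho Ctilde = spearmanRho C ∧
    spearmanFootrule Ctilde = spearmanFootrule C := by
  have hhalf : (1/2 : ℝ) + 1/2 = 1 := add_halves 1
  set S : ℝ → ℝ → ℝ := fun u v => 1/2 * C u v + 1/2 * survival C u v with hS_def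
  have hS : IsCopula S := hC.convexComb hC.survival one_half_pos.le one_half_pos.le hhalf
  have hCtilde : Ctilde = fun u v => 1/2 * S u v + 1/2 * Function.swap S u v := by
    funext u v
    simp only [hdef, hS_def, survival, Function.swap]
    ring
  refine ⟨?_, fun u _ v _ => ?_, fun u _ v _ => ?_, ?_, ?_⟩
  · rw [hCtilde]
    exact hS.convexComb hS.swap one_half_pos.le one_half_pos.le hhalf
  · rw [hdef, hdef]
    ring
  · rw [hdef, hdef, sub_sub_cancel, sub_sub_cancel]
    ring
  · rw [hCtilde, spearmanRho_convexComb hS hS.swap hhalf, spearmanRho_swap hS,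
      spearmanRho_convexComb hC hC.survival hhalf, spearmanRho_survival hC]
    ring
  · rw [hCtilde, spearmanFootrule_convexComb hS hS.swap hhalf,
      show spearmanFootrule (Function.swap S) = spearmanFootrule S from rfl,
      spearmanFootrule_convexComb hC hC.survival hhalf, spearmanFootrule_survival hC]
    ring
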